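/- Let d ≥ 1, let a ∈ ℝ^d (the advection velocity), let s ∈ ℝ, and let n ∈ ℝ^d be the outward unit normal from the minus side of an interface. Consider the linear advection flux F(u) = u·a. For interior states u₋, u₊ ∈ ℝ, set the trace value û = (u₋ + u₊)/2, and define the hybridized interface fluxes 𝔉̂₋ = F(û) + s·(u₋ − û)·n and 𝔉̂₊ = F(û) + s·(u₊ − û)·(−n). Then (i) the hybridized normal flux from the minus side equals the standard Rusanov/local Lax–Friedrichs flux: 𝔉̂₋ ⬝ n = (1/2)·(F(u₋) + F(u₊)) ⬝ n + (s/2)·(u₋ − u₊), and (ii) the scheme is conservative at the interface: 𝔉̂₋ ⬝ n + 𝔉̂₊ ⬝ (−n) = 0, i.e. the normal fluxes seen from the two sides are equal and opposite. Hence for linear advection, the hybridized FR method with trace equal to the interface average recovers exactly the standard FR Rusanov interface flux. -/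
import Mathlib


open scoped RealInnerProductSpace

/-- For linear advection `F(u) = u • a`, the hybridized FR interface flux with
trace equal to the interface average `û = (u₋ + u₊)/2` recovers exactly the
standard Rusanov/local Lax–Friedrichs flux of the FR method, and the normal
fluxes seen from the two sides of the interface are equal and opposite. -/
theorem hfr_linear_advection_recovers_rusanov
    (d : ℕ) (hd : 1 ≤ d) (a : EuclideanSpace ℝ (Fin d)) (s : ℝ)
    (n : EuclideanSpace ℝ (Fin d)) (hn : ‖n‖ = 1)
    (um up : ℝ) :
    let F : ℝ → EuclideanSpace ℝ (Fin d) := fun u => u • a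
    let uhat : ℝ := (um + up) / 2
    let Fm : EuclideanSpace ℝ (Fin d) := F uhat + (s * (um - uhat)) • n
    let Fp : EuclideanSpace ℝ (Fin d) := F uhat + (s * (up - uhat)) • (-n)
    (⟪Fm, n⟫ = (1 / 2) * ⟪F um + F up, n⟫ + (s / 2) * (um - up)) ∧
    (⟪Fm, n⟫ + ⟪Fp, -n⟫ = 0) := by
  intro F uhat Fm Fp
  have hnn : ⟪n, n⟫ = 1 := by
    rw [real_inner_self_eq_norm_sq, hn]; norm_num
  simp only [Fm, Fp, F, uhat, inner_add_left, real_inner_smul_left, inner_neg_left,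
    inner_neg_right]
  constructor <;> rw [hnn] <;> ring
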